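/- arXiv:2205.06653 — 4 statements merged into one kernel-verified Lean document; each statement's English description precedes it below -/
import Mathlib

section
/- Let M be a discrete m-function whose continued fraction coefficients (a_n,b_n)_{n≥1} are eventually periodic, i.e., there exist k ≥ 0 and p ≥ 1 with a_{n+p} = a_n and b_{n+p} = b_n for all n > k. Then M is a quadratic irrationality: there exist polynomials α, β, γ ∈ ℝ[z] with α not identically zero such that α(z)M(z)² + β(z)M(z) + γ(z) = 0 for all z ∈ ℂ₊. -/
open MeasureTheory Polynomial Filter

noncomputable section

/-- A discrete m-function: the Cauchy transform of a compactly supported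
probability measure on `ℝ`, viewed as a function on the upper half plane
`ℂ₊ = {z : 0 < z.im}`. -/
def IsDiscreteMFunction (m : ℂ → ℂ) : Prop :=
  ∃ ρ : Measure ℝ, IsProbabilityMeasure ρ ∧ (∃ t : ℝ, ρ (Set.Icc (-t) t) = 1) ∧
    ∀ z : ℂ, 0 < z.im → m z = ∫ x : ℝ, ((x : ℂ) - z)⁻¹ ∂ρ

/-- `m` has continued fraction (Jacobi) coefficients `{(a n, b n)}_{n ≥ 1}`
(sequences indexed from 1; index 0 unused) with stripping sequence `ms`. -/
def HasJacobiCoeffs (m : ℂ → ℂ) (a b : ℕ → ℝ) (ms : ℕ → ℂ → ℂ) : Prop :=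
  ms 0 = m ∧ (∀ n, IsDiscreteMFunction (ms n)) ∧
    ∀ n, ∀ z : ℂ, 0 < z.im →
      ms n z = ((b (n + 1) : ℂ) - z - (a (n + 1) : ℂ) ^ 2 * ms (n + 1) z)⁻¹

/-- Shifted first-kind polynomials: `pShift a b (j+1) = p_j(·; {a_i, b_i}_{i=1}^j)`,
so `pShift a b 0 = p₋₁ = 0`, `pShift a b 1 = p₀ = 1`, and the recurrence
`z p_j = a_{j+1} p_{j+1} + b_{j+1} p_j + a_j p_{j-1}` holds. -/
def pShift (a b : ℕ → ℝ) : ℕ → ℂ → ℂ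
  | 0 => fun _ => 0
  | 1 => fun _ => 1
  | (n + 2) => fun z =>
      ((z - (b (n + 1) : ℂ)) * pShift a b (n + 1) z - (a n : ℂ) * pShift a b n z) /
        (a (n + 1) : ℂ)

/-- The first-kind polynomial `p_n(z; {a_j, b_j}_{j=1}^n)`. -/
def firstKind (a b : ℕ → ℝ) (n : ℕ) : ℂ → ℂ := pShift a b (n + 1)

/-- The second-kind polynomial `q_n(z; {a_j, b_j}_{j=1}^n) = a₁⁻¹ p_{n-1}(z; {a_j, b_j}_{j=2}^n)`,
with `q₀ = 0`. -/
def secondKind (a b : ℕ → ℝ) (n : ℕ) : ℂ → ℂ :=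
  fun z => ((a 1 : ℂ))⁻¹ * pShift (fun j => a (j + 1)) (fun j => b (j + 1)) n z

/-- The conjugated transfer matrix `T_n = [[p_n, q_n], [-a_n p_{n-1}, -a_n q_{n-1}]]`
of the parameters `(a_j, b_j)_{j=1}^n`. -/
def ctm (a b : ℕ → ℝ) (n : ℕ) : Matrix (Fin 2) (Fin 2) (ℂ → ℂ) :=
  !![firstKind a b n, secondKind a b n;
     (fun z => -(a n : ℂ) * firstKind a b (n - 1) z),
     (fun z => -(a n : ℂ) * secondKind a b (n - 1) z)]

/-- The finite string `(s (start+1), …, s (start+len))` is a palindrome. -/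
def PalSeg {α : Type*} (s : ℕ → α) (start len : ℕ) : Prop :=
  ∀ i, 1 ≤ i → i ≤ len → s (start + i) = s (start + (len + 1 - i))

/-- The pair of `p`-periodic sequences `(a, b)` is doubly palindromic with period `p`
and first length `ℓ` (`1 ≤ ℓ ≤ p - 2`): `(a₁,…,a_ℓ)` and `(a_{ℓ+1},…,a_p)` are palindromes,
and `(b₁,…,b_{ℓ+1})` and `(b_{ℓ+2},…,b_p)` are palindromes. -/
def DoublyPalindromic (a b : ℕ → ℝ) (p ℓ : ℕ) : Prop :=
  1 ≤ ℓ ∧ ℓ + 2 ≤ p ∧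
    PalSeg a 0 ℓ ∧ PalSeg a ℓ (p - ℓ) ∧
    PalSeg b 0 (ℓ + 1) ∧ PalSeg b (ℓ + 1) (p - (ℓ + 1))

open scoped Topology

/-!
Stripping the continued fraction is a Möbius action: `M` is the image of `m_{k+1}` under the
polynomial transfer matrix `T` of the first `k + 1` coefficients, and `m_{k+1}` is the image of
`m_{k+1+p}` under the transfer matrix `S` of one period. By periodicity `m_{k+1}` and
`m_{k+1+p}` have the same coefficients. Since `‖m(z)‖ ≤ 1 / Im z` for every m-function, the
difference of two m-functions with the same bounded coefficients `|aₙ| ≤ A` shrinks by the factor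
`(A / Im z)²` at every step of the continued fraction, so they agree where `Im z > A`, hence on all
of `ℂ₊` by analytic continuation. Thus `m_{k+1}` is a fixed point of `S`, a root of a quadratic
with polynomial coefficients, and pulling it back through `T` gives the quadratic for `M`. Its
leading coefficient does not vanish: otherwise the discriminant `(tr S)² - 4 det S` would be a
square in `ℝ[z]`, which is impossible as `det S` is a nonzero constant and `tr S` has degree `p`.
-/

section MFunction

variable {m : ℂ → ℂ} {z : ℂ}

lemma im_le_norm_ofReal_sub (x : ℝ) (z : ℂ) : z.im ≤ ‖(x : ℂ) - z‖ := by
  simpa using (neg_le_abs _).trans (Complex.abs_im_le_norm ((x : ℂ) - z))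

lemma ofReal_sub_ne_zero (x : ℝ) (hz : 0 < z.im) : (x : ℂ) - z ≠ 0 :=
  norm_pos_iff.mp (hz.trans_le (im_le_norm_ofReal_sub x z))

lemma norm_inv_ofReal_sub_le (x : ℝ) (hz : 0 < z.im) : ‖((x : ℂ) - z)⁻¹‖ ≤ z.im⁻¹ := by
  rw [norm_inv]
  exact inv_anti₀ hz (im_le_norm_ofReal_sub x z)

lemma integrable_inv_ofReal_sub (ρ : Measure ℝ) [IsFiniteMeasure ρ] (hz : 0 < z.im) :
    Integrable (fun x : ℝ => ((x : ℂ) - z)⁻¹) ρ :=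
  Integrable.mono' (integrable_const z.im⁻¹)
    ((Complex.continuous_ofReal.sub continuous_const).inv₀
      fun x => ofReal_sub_ne_zero x hz).aestronglyMeasurable
    (ae_of_all _ fun x => norm_inv_ofReal_sub_le x hz)

namespace IsDiscreteMFunction

lemma norm_le (hm : IsDiscreteMFunction m) (hz : 0 < z.im) : ‖m z‖ ≤ z.im⁻¹ := by
  obtain ⟨ρ, hρ, -, hrep⟩ := hm
  rw [hrep z hz]
  simpa using norm_integral_le_of_norm_le_const (μ := ρ)
    (ae_of_all _ fun x => norm_inv_ofReal_sub_le x hz)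

lemma im_pos (hm : IsDiscreteMFunction m) (hz : 0 < z.im) : 0 < (m z).im := by
  obtain ⟨ρ, hρ, -, hrep⟩ := hm
  have him : ∀ x : ℝ, 0 < (((x : ℂ) - z)⁻¹).im := fun x => by
    rw [Complex.inv_im]
    have := Complex.normSq_pos.2 (ofReal_sub_ne_zero x hz)
    simp only [Complex.sub_im, Complex.ofReal_im, zero_sub, neg_neg]
    positivity
  have hint := integral_im (integrable_inv_ofReal_sub ρ hz)
  simp only [RCLike.im_to_complex] at hint
  rw [hrep z hz, ← hint, integral_pos_iff_support_of_nonneg (fun x => (him x).le)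
    (integrable_inv_ofReal_sub ρ hz).im, Function.support_eq_univ fun x => (him x).ne']
  simp

lemma ne_zero (hm : IsDiscreteMFunction m) (hz : 0 < z.im) : m z ≠ 0 := fun h0 => by
  simpa [h0] using hm.im_pos hz

lemma differentiableOn (hm : IsDiscreteMFunction m) :
    DifferentiableOn ℂ m {z : ℂ | 0 < z.im} := by
  obtain ⟨ρ, hρ, -, hrep⟩ := hm
  intro z₀ hz₀
  set ε := z₀.im / 2
  have hε : 0 < ε := half_pos hz₀
  have hs : {z : ℂ | ε < z.im} ∈ 𝓝 z₀ :=
    (isOpen_lt continuous_const Complex.continuous_im).mem_nhds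
      (show ε < z₀.im from half_lt_self hz₀)
  have hderiv := hasDerivAt_integral_of_dominated_loc_of_deriv_le (μ := ρ)
    (F := fun z (x : ℝ) => ((x : ℂ) - z)⁻¹) (F' := fun z (x : ℝ) => ((x : ℂ) - z)⁻¹ ^ 2)
    (bound := fun _ => ε⁻¹ ^ 2) hs
    (eventually_of_mem hs fun z hz =>
      (integrable_inv_ofReal_sub ρ (hε.trans hz)).aestronglyMeasurable)
    (integrable_inv_ofReal_sub ρ hz₀)
    ((integrable_inv_ofReal_sub ρ hz₀).aestronglyMeasurable.pow 2)
    (ae_of_all _ fun x z (hz : ε < z.im) => by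
      rw [norm_pow]
      exact pow_le_pow_left₀ (norm_nonneg _)
        ((norm_inv_ofReal_sub_le x (hε.trans hz)).trans (inv_anti₀ hε hz.le)) 2)
    (integrable_const _)
    (ae_of_all _ fun x z (hz : ε < z.im) => by
      simpa [inv_pow] using ((hasDerivAt_id' z).const_sub (x : ℂ)).fun_inv
        (ofReal_sub_ne_zero x (hε.trans hz)))
  have hm : m =ᶠ[𝓝 z₀] fun z => ∫ x : ℝ, ((x : ℂ) - z)⁻¹ ∂ρ :=
    eventually_of_mem hs fun z hz => hrep z (hε.trans hz)
  exact (hderiv.2.congr_of_eventuallyEq hm).differentiableAt.differentiableWithinAt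

end IsDiscreteMFunction

lemma eqOn_of_eqOn_im_gt {f g : ℂ → ℂ} (hf : DifferentiableOn ℂ f {z : ℂ | 0 < z.im})
    (hg : DifferentiableOn ℂ g {z : ℂ | 0 < z.im}) (R : ℝ)
    (hfg : Set.EqOn f g {z : ℂ | R < z.im}) : Set.EqOn f g {z : ℂ | 0 < z.im} := by
  have hU : IsOpen {z : ℂ | 0 < z.im} := isOpen_lt continuous_const Complex.continuous_im
  set z₀ : ℂ := ⟨0, max R 0 + 1⟩
  have hz₀ : R < z₀.im := show R < max R 0 + 1 by linarith [le_max_left R 0]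
  have hfg₀ : f =ᶠ[𝓝 z₀] g :=
    eventually_of_mem ((isOpen_lt continuous_const Complex.continuous_im).mem_nhds hz₀) hfg
  exact (hf.analyticOnNhd hU).eqOn_of_preconnected_of_eventuallyEq
    (hg.analyticOnNhd hU) (convex_halfSpace_im_gt 0).isPreconnected
    (show 0 < max R 0 + 1 by positivity) hfg₀

end MFunction

lemma eq_zero_of_norm_le_mul_norm_succ {E : Type*} [NormedAddCommGroup E] {d : ℕ → E} {r C : ℝ}
    (hr₀ : 0 ≤ r) (hr₁ : r < 1) (hd : ∀ n, ‖d n‖ ≤ r * ‖d (n + 1)‖) (hC : ∀ n, ‖d n‖ ≤ C) :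
    d 0 = 0 := by
  have hpow : ∀ N, ‖d 0‖ ≤ r ^ N * C := fun N => by
    refine le_trans ?_ (mul_le_mul_of_nonneg_left (hC N) (pow_nonneg hr₀ N))
    induction N with
    | zero => simp
    | succ N ih =>
      calc ‖d 0‖ ≤ r ^ N * ‖d N‖ := ih
        _ ≤ r ^ N * (r * ‖d (N + 1)‖) := mul_le_mul_of_nonneg_left (hd N) (pow_nonneg hr₀ N)
        _ = r ^ (N + 1) * ‖d (N + 1)‖ := by ring
  have hlim : Tendsto (fun N => r ^ N * C) atTop (𝓝 0) := by
    simpa using (tendsto_pow_atTop_nhds_zero_of_lt_one hr₀ hr₁).mul_const C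
  exact norm_le_zero_iff.mp (ge_of_tendsto' hlim hpow)

namespace HasJacobiCoeffs

variable {m m' : ℂ → ℂ} {a b : ℕ → ℝ} {ms ms' : ℕ → ℂ → ℂ} {z : ℂ}

lemma isDiscreteMFunction (h : HasJacobiCoeffs m a b ms) : IsDiscreteMFunction m :=
  h.1 ▸ h.2.1 0

lemma mul_denom_eq_one (h : HasJacobiCoeffs m a b ms) (n : ℕ) (hz : 0 < z.im) :
    ms n z * ((b (n + 1) : ℂ) - z - (a (n + 1) : ℂ) ^ 2 * ms (n + 1) z) = 1 := by
  have hne := (h.2.1 n).ne_zero hz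
  rw [h.2.2 n z hz] at hne ⊢
  exact inv_mul_cancel₀ fun h0 => hne (by rw [h0, inv_zero])

lemma shift (h : HasJacobiCoeffs m a b ms) (n : ℕ) :
    HasJacobiCoeffs (ms n) (fun j => a (n + j)) (fun j => b (n + j)) (fun j => ms (n + j)) :=
  ⟨rfl, fun j => h.2.1 (n + j), fun j => h.2.2 (n + j)⟩

lemma sub_eq_mul_sub_succ (h : HasJacobiCoeffs m a b ms) (h' : HasJacobiCoeffs m' a b ms')
    (n : ℕ) (hz : 0 < z.im) :
    ms n z - ms' n z = ms n z * ms' n z * (a (n + 1) : ℂ) ^ 2 * (ms (n + 1) z - ms' (n + 1) z) := by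
  linear_combination ms' n z * h.mul_denom_eq_one n hz - ms n z * h'.mul_denom_eq_one n hz

theorem unique (h : HasJacobiCoeffs m a b ms) (h' : HasJacobiCoeffs m' a b ms') {A : ℝ}
    (hA : ∀ n, |a n| ≤ A) : Set.EqOn m m' {z : ℂ | 0 < z.im} := by
  refine eqOn_of_eqOn_im_gt h.isDiscreteMFunction.differentiableOn
    h'.isDiscreteMFunction.differentiableOn A fun z (hAz : A < z.im) => ?_
  have hA₀ : 0 ≤ A := (abs_nonneg _).trans (hA 0)
  have hz : 0 < z.im := hA₀.trans_lt hAz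
  have hcontract : ∀ n, ‖ms n z - ms' n z‖ ≤
      (A / z.im) ^ 2 * ‖ms (n + 1) z - ms' (n + 1) z‖ := fun n => by
    rw [h.sub_eq_mul_sub_succ h' n hz, norm_mul, norm_mul, norm_mul, norm_pow, Complex.norm_real,
      Real.norm_eq_abs]
    calc ‖ms n z‖ * ‖ms' n z‖ * |a (n + 1)| ^ 2 * ‖ms (n + 1) z - ms' (n + 1) z‖
        ≤ z.im⁻¹ * z.im⁻¹ * A ^ 2 * ‖ms (n + 1) z - ms' (n + 1) z‖ := by
          gcongr
          exacts [(h.2.1 n).norm_le hz, (h'.2.1 n).norm_le hz, hA (n + 1)]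
      _ = (A / z.im) ^ 2 * ‖ms (n + 1) z - ms' (n + 1) z‖ := by ring
  have hbound : ∀ n, ‖ms n z - ms' n z‖ ≤ z.im⁻¹ + z.im⁻¹ := fun n =>
    (norm_sub_le _ _).trans (add_le_add ((h.2.1 n).norm_le hz) ((h'.2.1 n).norm_le hz))
  have hr : (A / z.im) ^ 2 < 1 := pow_lt_one₀ (by positivity) ((div_lt_one hz).2 hAz) two_ne_zero
  have := eq_zero_of_norm_le_mul_norm_succ (by positivity) hr hcontract hbound
  rwa [sub_eq_zero, h.1, h'.1] at this

end HasJacobiCoeffs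

lemma Function.Periodic.exists_abs_le {f : ℕ → ℝ} {p : ℕ} (hf : Function.Periodic f p)
    (hp : 0 < p) : ∃ A, ∀ n, |f n| ≤ A :=
  ⟨∑ i ∈ Finset.range p, |f i|, fun n => hf.map_mod_nat n ▸
    Finset.single_le_sum (fun i _ => abs_nonneg (f i)) (Finset.mem_range.2 (Nat.mod_lt n hp))⟩

lemma HasJacobiCoeffs.eq_of_periodic {m : ℂ → ℂ} {a b : ℕ → ℝ} {ms : ℕ → ℂ → ℂ} {k p : ℕ}
    (h : HasJacobiCoeffs m a b ms) (hp : 0 < p) (haper : ∀ n, k < n → a (n + p) = a n)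
    (hbper : ∀ n, k < n → b (n + p) = b n) :
    ∀ z : ℂ, 0 < z.im → ms (k + 1 + p) z = ms (k + 1) z := by
  have ha : (fun j => a (k + 1 + p + j)) = fun j => a (k + 1 + j) := funext fun j => by
    rw [add_right_comm]; exact haper _ (by omega)
  have hb : (fun j => b (k + 1 + p + j)) = fun j => b (k + 1 + j) := funext fun j => by
    rw [add_right_comm]; exact hbper _ (by omega)
  obtain ⟨A, hA⟩ := Function.Periodic.exists_abs_le (f := fun j => a (k + 1 + j))
    (fun j => by simp only [← add_assoc]; exact haper _ (by omega)) hp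
  have hshift := h.shift (k + 1 + p)
  rw [ha, hb] at hshift
  exact hshift.unique (h.shift (k + 1)) hA

section Mobius

variable {R : Type*} [CommRing R] {T S : Matrix (Fin 2) (Fin 2) R} {w w' w'' x y : R}

/-- `w = (T₀₀ w' + T₀₁) / (T₁₀ w' + T₁₁)`, cross-multiplied: in this form the relation composes
without any nonvanishing hypothesis. -/
def IsMobiusImage (T : Matrix (Fin 2) (Fin 2) R) (w w' : R) : Prop :=
  w * (T 1 0 * w' + T 1 1) = T 0 0 * w' + T 0 1

lemma IsMobiusImage.mul (hT : IsMobiusImage T w w') (hS : IsMobiusImage S w' w'') :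
    IsMobiusImage (T * S) w w'' := by
  unfold IsMobiusImage at *
  simp only [Matrix.mul_apply, Fin.sum_univ_two]
  linear_combination (S 1 0 * w'' + S 1 1) * hT - (w * T 1 0 - T 0 0) * hS

/-- The binary quadratic form whose zeros `[x : y]` are the fixed points `x / y` of the Möbius map
of `S`. -/
def fixedPointForm (S : Matrix (Fin 2) (Fin 2) R) (x y : R) : R :=
  S 1 0 * x ^ 2 + (S 1 1 - S 0 0) * x * y - S 0 1 * y ^ 2

lemma fixedPointForm_mul_add (S : Matrix (Fin 2) (Fin 2) R) (x y x' y' w : R) :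
    fixedPointForm S (x * w + x') (y * w + y') = fixedPointForm S x y * w ^ 2 +
      (fixedPointForm S (x + x') (y + y') - fixedPointForm S x y - fixedPointForm S x' y') * w +
      fixedPointForm S x' y' := by
  simp only [fixedPointForm]
  ring

lemma map_fixedPointForm {R' F : Type*} [CommRing R'] [FunLike F R R'] [RingHomClass F R R']
    (f : F) (S : Matrix (Fin 2) (Fin 2) R) (x y : R) :
    f (fixedPointForm S x y) = fixedPointForm (S.map f) (f x) (f y) := by
  simp [fixedPointForm]

lemma IsMobiusImage.fixedPointForm_eq_zero (hT : IsMobiusImage T w w') (hS : IsMobiusImage S w' w') :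
    fixedPointForm S (-T 1 1 * w + T 0 1) (T 1 0 * w + -T 0 0) = 0 := by
  unfold IsMobiusImage at hT hS
  unfold fixedPointForm
  -- `hT` reads `-T 1 1 * w + T 0 1 = w' * d - δ` with `δ = 0`, so the value is `d ^ 2` times the
  -- value at `[w' : 1]`, which vanishes by `hS`.
  set d := T 1 0 * w - T 0 0
  set δ := w * (T 1 0 * w' + T 1 1) - (T 0 0 * w' + T 0 1)
  linear_combination d ^ 2 * hS + (S 1 0 * δ - 2 * S 1 0 * w' * d - (S 1 1 - S 0 0) * d) * hT

lemma isSquare_trace_sq_sub_det [IsDomain R] [IsIntegrallyClosed R] (hy : y ≠ 0)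
    (h : fixedPointForm S x y = 0) : IsSquare (S.trace ^ 2 - 4 * S.det) := by
  have hdisc : (2 * S 1 0 * x + (S 1 1 - S 0 0) * y) ^ 2 = (S.trace ^ 2 - 4 * S.det) * y ^ 2 := by
    rw [Matrix.trace_fin_two, Matrix.det_fin_two]
    unfold fixedPointForm at h
    linear_combination 4 * S 1 0 * h
  obtain ⟨E, hE⟩ := (IsIntegrallyClosed.pow_dvd_pow_iff two_ne_zero).mp
    (Dvd.intro_left _ hdisc.symm)
  refine ⟨E, mul_left_cancel₀ (pow_ne_zero 2 hy) ?_⟩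
  rw [mul_comm (y ^ 2), ← hdisc, hE]
  ring

end Mobius

lemma Polynomial.not_isSquare_sq_sub_C {K : Type*} [Field K] [NeZero (2 : K)] {T : K[X]}
    (hT : 0 < T.natDegree) {c : K} (hc : c ≠ 0) : ¬ IsSquare (T ^ 2 - C c) := by
  rintro ⟨E, hE⟩
  have hunit : IsUnit ((T - E) * (T + E)) := by
    rw [show (T - E) * (T + E) = C c by linear_combination hE]
    exact isUnit_C.mpr hc.isUnit
  have h₁ := natDegree_eq_zero_of_isUnit (isUnit_of_mul_isUnit_left hunit)
  have h₂ := natDegree_eq_zero_of_isUnit (isUnit_of_mul_isUnit_right hunit)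
  have h2T : C 2 * T = (T - E) + (T + E) := by rw [C_ofNat]; ring
  have := natDegree_add_le (T - E) (T + E)
  rw [← h2T, natDegree_C_mul (NeZero.ne 2)] at this
  omega

section TransferMatrix

variable (a b : ℕ → ℝ)

/-- `m_{j-1} = 1 / (b_j - z - a_j² m_j)` makes `m_{j-1}` the Möbius image of `m_j` under this
matrix at `z`. -/
def stepMatrix (j : ℕ) : Matrix (Fin 2) (Fin 2) ℝ[X] :=
  !![0, 1; -C (a j ^ 2), C (b j) - X]

def transferMatrix (s : ℕ) : ℕ → Matrix (Fin 2) (Fin 2) ℝ[X]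
  | 0 => 1
  | n + 1 => transferMatrix s n * stepMatrix a b (s + n + 1)

variable {a b}

lemma det_transferMatrix (s n : ℕ) :
    (transferMatrix a b s n).det = C (∏ j ∈ Finset.range n, a (s + j + 1) ^ 2) := by
  induction n with
  | zero => simp [transferMatrix]
  | succ n ih =>
    rw [transferMatrix, Matrix.det_mul, ih, Finset.prod_range_succ, C_mul, stepMatrix,
      Matrix.det_fin_two_of]
    ring

lemma transferMatrix_succ_apply_zero {s n : ℕ} (i : Fin 2) :
    transferMatrix a b s (n + 1) i 0 = transferMatrix a b s n i 1 * -C (a (s + n + 1) ^ 2) := by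
  simp [transferMatrix, stepMatrix, Matrix.mul_apply, Fin.sum_univ_two]

lemma transferMatrix_succ_apply_one {s n : ℕ} (i : Fin 2) :
    transferMatrix a b s (n + 1) i 1 =
      transferMatrix a b s n i 0 + transferMatrix a b s n i 1 * (C (b (s + n + 1)) - X) := by
  simp [transferMatrix, stepMatrix, Matrix.mul_apply, Fin.sum_univ_two]

lemma degree_row_step {u v : ℝ[X]} (c β : ℝ) (h : u.degree < v.degree) :
    (v * -C c).degree < (u + v * (C β - X)).degree ∧
      (u + v * (C β - X)).degree = v.degree + 1 := by
  have hv : v ≠ 0 := by rintro rfl; simp at h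
  have hmul : (v * (C β - X)).degree = v.degree + 1 := by
    rw [degree_mul, show C β - X = -(X - C β) by ring, degree_neg, degree_X_sub_C]
  have hlt : v.degree < v.degree + 1 := by
    rw [degree_eq_natDegree hv]; exact_mod_cast Nat.lt_succ_self _
  rw [degree_add_eq_right_of_degree_lt (h.trans (hmul ▸ hlt)), hmul]
  refine ⟨lt_of_le_of_lt ?_ hlt, rfl⟩
  rw [mul_neg, degree_neg]
  rcases eq_or_ne c 0 with rfl | hc
  · simp
  · rw [degree_mul_C hc]

lemma degree_transferMatrix_row {s : ℕ} (i : Fin 2) (n₀ : ℕ)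
    (h : (transferMatrix a b s n₀ i 0).degree < (transferMatrix a b s n₀ i 1).degree) (n : ℕ) :
    (transferMatrix a b s (n₀ + n) i 0).degree < (transferMatrix a b s (n₀ + n) i 1).degree ∧
      (transferMatrix a b s (n₀ + n) i 1).degree = (transferMatrix a b s n₀ i 1).degree + n := by
  induction n with
  | zero => simpa using h
  | succ n ih =>
    rw [← add_assoc, transferMatrix_succ_apply_zero, transferMatrix_succ_apply_one]
    obtain ⟨hlt, hdeg⟩ := degree_row_step (a (s + (n₀ + n) + 1) ^ 2) (b (s + (n₀ + n) + 1)) ih.1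
    exact ⟨hlt, by rw [hdeg, ih.2, Nat.cast_succ, add_assoc]⟩

lemma degree_transferMatrix_one_one (s n : ℕ) :
    (transferMatrix a b s n 1 1).degree = n := by
  simpa [transferMatrix] using (degree_transferMatrix_row (a := a) (b := b) (s := s) 1 0
    (by simp [transferMatrix]) n).2

lemma natDegree_trace_transferMatrix (s n : ℕ) : (transferMatrix a b s n).trace.natDegree = n := by
  rcases n with _ | n
  · simp [transferMatrix]
  have hrow := degree_transferMatrix_row (a := a) (b := b) (s := s) 0 1
    (by simp [transferMatrix, stepMatrix]) n
  rw [show transferMatrix a b s 1 0 1 = 1 by simp [transferMatrix, stepMatrix], degree_one,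
    zero_add, add_comm 1 n] at hrow
  have hlt : (transferMatrix a b s (n + 1) 0 0).degree < (transferMatrix a b s (n + 1) 1 1).degree := by
    rw [degree_transferMatrix_one_one]
    exact hrow.1.trans_le (by rw [hrow.2]; exact_mod_cast n.le_succ)
  rw [Matrix.trace_fin_two]
  exact natDegree_eq_of_degree_eq_some
    ((degree_add_eq_right_of_degree_lt hlt).trans (degree_transferMatrix_one_one s (n + 1)))

lemma transferMatrix_succ_one_zero_ne_zero {s n : ℕ} (ha : a (s + n + 1) ≠ 0) :
    transferMatrix a b s (n + 1) 1 0 ≠ 0 := by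
  rw [transferMatrix_succ_apply_zero]
  refine mul_ne_zero (fun h => ?_) (neg_ne_zero.2 (C_ne_zero.2 (pow_ne_zero 2 ha)))
  simpa [h] using degree_transferMatrix_one_one (a := a) (b := b) s n

lemma HasJacobiCoeffs.isMobiusImage_transferMatrix {m : ℂ → ℂ} {ms : ℕ → ℂ → ℂ} {z : ℂ}
    (h : HasJacobiCoeffs m a b ms) (s n : ℕ) (hz : 0 < z.im) :
    IsMobiusImage ((transferMatrix a b s n).map (aeval z)) (ms s z) (ms (s + n) z) := by
  induction n with
  | zero => simp [IsMobiusImage, transferMatrix]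
  | succ n ih =>
    rw [transferMatrix, Matrix.map_mul]
    refine ih.mul ?_
    simp only [IsMobiusImage, stepMatrix, Matrix.map_apply, Matrix.of_apply, Matrix.cons_val',
      Matrix.cons_val_zero, Matrix.cons_val_one, Matrix.cons_val_fin_one, map_neg, map_sub, map_pow,
      map_zero, map_one, aeval_C, aeval_X, Complex.coe_algebraMap]
    linear_combination h.mul_denom_eq_one (s + n) hz

end TransferMatrix

lemma fixedPointForm_ne_zero {K : Type*} [Field K] [NeZero (2 : K)]
    {S : Matrix (Fin 2) (Fin 2) K[X]} {x y : K[X]} (hy : y ≠ 0) (htr : 0 < S.trace.natDegree)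
    {c : K} (hc : c ≠ 0) (hdet : S.det = C c) : fixedPointForm S x y ≠ 0 := fun h => by
  have h4 : (4 : K) ≠ 0 := by
    rw [show (4 : K) = 2 ^ 2 by norm_num]
    exact pow_ne_zero 2 two_ne_zero
  exact not_isSquare_sq_sub_C htr (mul_ne_zero h4 hc)
    (by simpa [hdet, C_mul, C_ofNat] using isSquare_trace_sq_sub_det hy h)

theorem quadratic_irrationality_general
    (M : ℂ → ℂ) (a b : ℕ → ℝ) (ms : ℕ → ℂ → ℂ) (k p : ℕ) (hp : 1 ≤ p)
    (hapos : ∀ n, 1 ≤ n → 0 < a n)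
    (haper : ∀ n, k < n → a (n + p) = a n)
    (hbper : ∀ n, k < n → b (n + p) = b n)
    (hcoef : HasJacobiCoeffs M a b ms) :
    ∃ α β γ : Polynomial ℝ, α ≠ 0 ∧
      ∀ z : ℂ, 0 < z.im →
        aeval z α * M z ^ 2 + aeval z β * M z + aeval z γ = 0 := by
  set T := transferMatrix a b 0 (k + 1)
  set S := transferMatrix a b (k + 1) p
  refine ⟨fixedPointForm S (-T 1 1) (T 1 0),
    fixedPointForm S (-T 1 1 + T 0 1) (T 1 0 - T 0 0) - fixedPointForm S (-T 1 1) (T 1 0) -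
      fixedPointForm S (T 0 1) (-T 0 0),
    fixedPointForm S (T 0 1) (-T 0 0), ?_, fun z hz => ?_⟩
  · exact fixedPointForm_ne_zero
      (transferMatrix_succ_one_zero_ne_zero (hapos _ (by omega)).ne')
      (by rw [natDegree_trace_transferMatrix]; omega)
      (Finset.prod_ne_zero_iff.2 fun j _ => pow_ne_zero 2 (hapos _ (by omega)).ne')
      (det_transferMatrix _ _)
  · have hT := hcoef.isMobiusImage_transferMatrix 0 (k + 1) hz
    rw [zero_add, hcoef.1] at hT
    have hS := hcoef.isMobiusImage_transferMatrix (k + 1) p hz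
    rw [hcoef.eq_of_periodic hp haper hbper z hz] at hS
    have hquad := hT.fixedPointForm_eq_zero hS
    rw [fixedPointForm_mul_add] at hquad
    simpa [map_fixedPointForm, sub_eq_add_neg] using hquad

/-- A discrete m-function with eventually periodic continued fraction coefficients is a
quadratic irrationality: `α(z)M(z)² + β(z)M(z) + γ(z) = 0` on `ℂ₊` for some real
polynomials `α, β, γ` with `α ≠ 0`. -/
theorem quadratic_irrationality
    (M : ℂ → ℂ) (a b : ℕ → ℝ) (ms : ℕ → ℂ → ℂ) (k p : ℕ) (hp : 1 ≤ p)
    (hapos : ∀ n, 1 ≤ n → 0 < a n)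
    (haper : ∀ n, k < n → a (n + p) = a n)
    (hbper : ∀ n, k < n → b (n + p) = b n)
    (hM : IsDiscreteMFunction M)
    (hcoef : HasJacobiCoeffs M a b ms) :
    ∃ α β γ : Polynomial ℝ, α ≠ 0 ∧
      ∀ z : ℂ, 0 < z.im →
        aeval z α * M z ^ 2 + aeval z β * M z + aeval z γ = 0 :=
  quadratic_irrationality_general M a b ms k p hp hapos haper hbper hcoef
end
end

section
/- A discrete m-function has at most one sequence of continued fraction coefficients: if m has continued fraction coefficients {(a_n,b_n)}_{n≥1} with stripping sequence (m_n)_{n≥0} and also coefficients {(a'_n,b'_n)}_{n≥1} with stripping sequence (m'_n)_{n≥0}, then a_n = a'_n and b_n = b'_n for all n ≥ 1, and m_n = m'_n on ℂ₊ for all n ≥ 0. -/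
open MeasureTheory Polynomial Filter

noncomputable section

/-! For a discrete m-function `M`, dominated convergence gives `iy · M(iy) → -1` as `y → ∞`,
hence also `M(iy) → 0`. If `m₀ = m₀'`, the recursion gives
`b₁ - z - a₁² m₁(z) = b₁' - z - a₁'² m₁'(z)` on `ℂ₊`; letting `z = iy` with `y → ∞` yields
`b₁ = b₁'`, then, after multiplying by `iy`, `a₁² = a₁'²`, so `a₁ = a₁'` and `m₁ = m₁'`.
Induction on `n` does the rest. -/

open Complex Topology Bornology

lemma tendsto_ofReal_mul_I_atTop_cobounded :
    Tendsto (fun y : ℝ => (y : ℂ) * I) atTop (cobounded ℂ) := by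
  rw [← tendsto_norm_atTop_iff_cobounded]
  simpa using tendsto_abs_atTop_atTop

lemma eventually_im_ofReal_mul_I_pos : ∀ᶠ y : ℝ in atTop, 0 < ((y : ℂ) * I).im := by
  filter_upwards [eventually_gt_atTop 0] with y hy
  simpa using hy

lemma tendsto_mul_inv_const_sub_cobounded (c : ℂ) :
    Tendsto (fun w : ℂ => w * (c - w)⁻¹) (cobounded ℂ) (𝓝 (-1)) := by
  have hlim : Tendsto (fun w : ℂ => (c * w⁻¹ - 1)⁻¹) (cobounded ℂ) (𝓝 (-1)) := by
    simpa using ((tendsto_inv₀_cobounded.const_mul c).sub_const 1).inv₀ (by norm_num)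
  refine hlim.congr' ?_
  filter_upwards [eventually_ne_cobounded 0] with w hw
  rw [show c * w⁻¹ - 1 = (c - w) * w⁻¹ by rw [sub_mul, mul_inv_cancel₀ hw], mul_inv, inv_inv,
    mul_comm]

lemma tendsto_mul_integral_inv_sub (ρ : Measure ℝ) [IsProbabilityMeasure ρ] :
    Tendsto (fun y : ℝ => (y : ℂ) * I * ∫ x, ((x : ℂ) - y * I)⁻¹ ∂ρ) atTop (𝓝 (-1)) := by
  have hdom : Tendsto (fun y : ℝ => ∫ x, (y : ℂ) * I * ((x : ℂ) - y * I)⁻¹ ∂ρ) atTop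
      (𝓝 (∫ _, (-1 : ℂ) ∂ρ)) := by
    refine tendsto_integral_filter_of_dominated_convergence (fun _ => 1)
      (.of_forall fun y => (by fun_prop : Measurable _).aestronglyMeasurable)
      (.of_forall fun y => .of_forall fun x => ?_) (integrable_const 1)
      (.of_forall fun x => (tendsto_mul_inv_const_sub_cobounded x).comp
        tendsto_ofReal_mul_I_atTop_cobounded)
    -- `|y| = |Im (x - y I)| ≤ ‖x - y I‖`
    rw [norm_mul, norm_inv, ← div_eq_mul_inv]
    refine div_le_one_of_le₀ ?_ (norm_nonneg _)
    simpa using abs_im_le_norm ((x : ℂ) - y * I)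
  simpa [integral_const_mul] using hdom

namespace IsDiscreteMFunction

variable {M M' : ℂ → ℂ}

lemma tendsto_mul_apply_ofReal_mul_I (hM : IsDiscreteMFunction M) :
    Tendsto (fun y : ℝ => (y : ℂ) * I * M (y * I)) atTop (𝓝 (-1)) := by
  obtain ⟨ρ, hρ, -, hM⟩ := hM
  refine (tendsto_mul_integral_inv_sub ρ).congr' ?_
  filter_upwards [eventually_im_ofReal_mul_I_pos] with y hy
  rw [hM _ hy]

lemma tendsto_apply_ofReal_mul_I (hM : IsDiscreteMFunction M) :
    Tendsto (fun y : ℝ => M (y * I)) atTop (𝓝 0) := by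
  have h := (tendsto_inv₀_cobounded.comp tendsto_ofReal_mul_I_atTop_cobounded).mul
    hM.tendsto_mul_apply_ofReal_mul_I
  rw [zero_mul] at h
  refine h.congr' ?_
  filter_upwards [tendsto_ofReal_mul_I_atTop_cobounded.eventually_ne_cobounded 0] with y hy
  simp only [Function.comp_apply, inv_mul_cancel_left₀ hy]

lemma eq_of_mul_eq (hM : IsDiscreteMFunction M) (hM' : IsDiscreteMFunction M') {c c' : ℂ}
    (h : ∀ z : ℂ, 0 < z.im → c * M z = c' * M' z) : c = c' := by
  have hlim := hM.tendsto_mul_apply_ofReal_mul_I.const_mul c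
  have hlim' : Tendsto (fun y : ℝ => c * ((y : ℂ) * I * M (y * I))) atTop (𝓝 (c' * -1)) := by
    refine (hM'.tendsto_mul_apply_ofReal_mul_I.const_mul c').congr' ?_
    filter_upwards [eventually_im_ofReal_mul_I_pos] with y hy
    rw [mul_left_comm, ← h _ hy, mul_left_comm]
  simpa using tendsto_nhds_unique hlim hlim'

lemma eq_of_sub_mul_eq (hM : IsDiscreteMFunction M) (hM' : IsDiscreteMFunction M')
    {B B' c c' : ℂ} (h : ∀ z : ℂ, 0 < z.im → B - c * M z = B' - c' * M' z) : B = B' := by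
  have hlim := (hM.tendsto_apply_ofReal_mul_I.const_mul c).const_sub B
  have hlim' : Tendsto (fun y : ℝ => B - c * M (y * I)) atTop (𝓝 (B' - c' * 0)) := by
    refine ((hM'.tendsto_apply_ofReal_mul_I.const_mul c').const_sub B').congr' ?_
    filter_upwards [eventually_im_ofReal_mul_I_pos] with y hy
    exact (h _ hy).symm
  simpa using tendsto_nhds_unique hlim hlim'

lemma jacobi_params_unique (hM : IsDiscreteMFunction M) (hM' : IsDiscreteMFunction M')
    {A A' B B' : ℝ} (hA : 0 < A) (hA' : 0 < A')
    (h : ∀ z : ℂ, 0 < z.im → (B : ℂ) - z - A ^ 2 * M z = B' - z - A' ^ 2 * M' z) :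
    A = A' ∧ B = B' ∧ ∀ z : ℂ, 0 < z.im → M z = M' z := by
  have hB : (B : ℂ) = B' :=
    hM.eq_of_sub_mul_eq hM' (c := A ^ 2) (c' := A' ^ 2) fun z hz => by linear_combination h z hz
  have hc : ∀ z : ℂ, 0 < z.im → (A : ℂ) ^ 2 * M z = A' ^ 2 * M' z := fun z hz => by
    linear_combination hB - h z hz
  have hA2 : (A : ℂ) ^ 2 = A' ^ 2 := hM.eq_of_mul_eq hM' hc
  refine ⟨(sq_eq_sq₀ hA.le hA'.le).mp (mod_cast hA2), mod_cast hB, fun z hz => ?_⟩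
  refine mul_left_cancel₀ (pow_ne_zero 2 (ofReal_ne_zero.mpr hA.ne')) ?_
  rw [hc z hz, hA2]

end IsDiscreteMFunction

namespace HasJacobiCoeffs

variable {m : ℂ → ℂ} {a b a' b' : ℕ → ℝ} {ms ms' : ℕ → ℂ → ℂ}

lemma succ_eq_of_eq (h : HasJacobiCoeffs m a b ms) (h' : HasJacobiCoeffs m a' b' ms') {n : ℕ}
    (ha : 0 < a (n + 1)) (ha' : 0 < a' (n + 1)) (hn : ∀ z : ℂ, 0 < z.im → ms n z = ms' n z) :
    a (n + 1) = a' (n + 1) ∧ b (n + 1) = b' (n + 1) ∧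
      ∀ z : ℂ, 0 < z.im → ms (n + 1) z = ms' (n + 1) z := by
  obtain ⟨-, hM, hrec⟩ := h
  obtain ⟨-, hM', hrec'⟩ := h'
  refine (hM (n + 1)).jacobi_params_unique (hM' (n + 1)) ha ha' fun z hz => inv_injective ?_
  rw [← hrec n z hz, ← hrec' n z hz, hn z hz]

end HasJacobiCoeffs

/-- A discrete m-function has at most one sequence of continued fraction coefficients,
and the corresponding stripping sequences agree on `ℂ₊`. -/
theorem coeffs_unique
    (m : ℂ → ℂ) (a b a' b' : ℕ → ℝ) (ms ms' : ℕ → ℂ → ℂ)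
    (hpos : ∀ n, 1 ≤ n → 0 < a n) (hpos' : ∀ n, 1 ≤ n → 0 < a' n)
    (h1 : HasJacobiCoeffs m a b ms) (h2 : HasJacobiCoeffs m a' b' ms') :
    (∀ n, 1 ≤ n → a n = a' n ∧ b n = b' n) ∧
      ∀ n, ∀ z : ℂ, 0 < z.im → ms n z = ms' n z := by
  have step n := h1.succ_eq_of_eq h2 (n := n) (hpos _ n.succ_pos) (hpos' _ n.succ_pos)
  have hms : ∀ n, ∀ z : ℂ, 0 < z.im → ms n z = ms' n z := by
    intro n
    induction n with
    | zero => simp [h1.1, h2.1]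
    | succ n ih => exact (step n ih).2.2
  refine ⟨fun n hn => ?_, hms⟩
  obtain ⟨n, rfl⟩ := Nat.exists_eq_add_of_le' hn
  exact ⟨(step n (hms n)).1, (step n (hms n)).2.1⟩
end
end

section
/- Coefficient reversal identities: let (α_j,β_j)_{j=1}^k be parameters with α_j > 0 and β_j ∈ ℝ, set α₀ := α_k, and let the reversed parameters be (α'_j, β'_j) = (α_{k−j}, β_{k−j+1}) for j = 1,…,k. Write p⁻_j(z) = p_j(z;{α'_i,β'_i}_{i=1}^j) and q⁻_j(z) = q_j(z;{α'_i,β'_i}_{i=1}^j). Then for all z: (i) p_k(z;{α_j,β_j}_{j=1}^k) = p⁻_k(z); (ii) p_{k−1}(z;{α_j,β_j}_{j=1}^{k−1}) = α_k · q⁻_k(z); (iii) q_k(z;{α_j,β_j}_{j=1}^k) = α_k⁻¹ · p⁻_{k−1}(z); (iv) q_{k−1}(z;{α_j,β_j}_{j=1}^{k−1}) = q⁻_{k−1}(z). -/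
open MeasureTheory Polynomial Filter

noncomputable section

open Matrix

namespace RevAux

def Am (a b : ℕ → ℝ) (z : ℂ) (j : ℕ) : Matrix (Fin 2) (Fin 2) ℂ :=
  !![z - (b j : ℂ), -1; ((a j : ℂ)) ^ 2, 0]

def Tm (a b : ℕ → ℝ) (z : ℂ) (j : ℕ) : Matrix (Fin 2) (Fin 2) ℂ :=
  !![(z - (b j : ℂ)) / (a j : ℂ), -((a j : ℂ))⁻¹; (a j : ℂ), 0]

def Pm (a b : ℕ → ℝ) (z : ℂ) : ℕ → Matrix (Fin 2) (Fin 2) ℂ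
  | 0 => 1
  | n + 1 => Tm a b z (n + 1) * Pm a b z n

def Qm (a b : ℕ → ℝ) (z : ℂ) : ℕ → Matrix (Fin 2) (Fin 2) ℂ
  | 0 => 1
  | n + 1 => Am a b z (n + 1) * Qm a b z n

def Dm (c : ℝ) : Matrix (Fin 2) (Fin 2) ℂ := !![1, 0; 0, -((c : ℂ)) ^ 2]

lemma Pm_entries (a b : ℕ → ℝ) (z : ℂ) : ∀ n : ℕ,
    Pm a b z (n + 1) =
      !![pShift a b (n + 2) z,
         -((a 1 : ℂ)⁻¹ * pShift (fun j => a (j + 1)) (fun j => b (j + 1)) (n + 1) z);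
         (a (n + 1) : ℂ) * pShift a b (n + 1) z,
         -((a (n + 1) : ℂ) * ((a 1 : ℂ)⁻¹ * pShift (fun j => a (j + 1)) (fun j => b (j + 1)) n z))] := by
  intro n
  induction n with
  | zero =>
      show Tm a b z 1 * Pm a b z 0 = _
      rw [show Pm a b z 0 = 1 from rfl, mul_one]
      ext i j
      fin_cases i <;> fin_cases j <;> simp [Tm, pShift] <;> ring
  | succ m ih =>
      show Tm a b z (m + 2) * Pm a b z (m + 1) = _
      rw [ih, Tm, Matrix.mul_fin_two]
      ext i j
      fin_cases i <;> fin_cases j <;>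
        simp [pShift] <;> ring

end RevAux

namespace RevAux

def Rm (a b : ℕ → ℝ) (z : ℂ) (k : ℕ) : ℕ → Matrix (Fin 2) (Fin 2) ℂ
  | 0 => 1
  | j + 1 => Rm a b z k j * Am a b z (k - j)

lemma conj_step (x y c : ℝ) (z : ℂ) :
    (!![z - (c : ℂ), -1; ((x : ℂ)) ^ 2, 0]) * Dm y =
      Dm x * (!![z - (c : ℂ), -1; ((y : ℂ)) ^ 2, 0])ᵀ := by
  have ht : (!![z - (c : ℂ), -1; ((y : ℂ)) ^ 2, 0])ᵀ = !![z - (c : ℂ), ((y : ℂ)) ^ 2; -1, 0] := by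
    ext i j; fin_cases i <;> fin_cases j <;> rfl
  rw [ht]; simp only [Dm, Matrix.mul_fin_two]
  ext i j
  fin_cases i <;> fin_cases j <;> simp <;> ring

lemma conj (a b : ℕ → ℝ) (k : ℕ) (z : ℂ) : ∀ j : ℕ,
    Qm (fun i => a (k - i)) (fun i => b (k + 1 - i)) z j * Dm (a k) =
      Dm (a (k - j)) * (Rm a b z k j)ᵀ := by
  intro j
  induction j with
  | zero => simp [Qm, Rm]
  | succ j ih =>
      have h1 : Qm (fun i => a (k - i)) (fun i => b (k + 1 - i)) z (j + 1) * Dm (a k)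
          = Am (fun i => a (k - i)) (fun i => b (k + 1 - i)) z (j + 1) *
            (Qm (fun i => a (k - i)) (fun i => b (k + 1 - i)) z j * Dm (a k)) := by
        rw [show Qm (fun i => a (k - i)) (fun i => b (k + 1 - i)) z (j + 1)
            = Am (fun i => a (k - i)) (fun i => b (k + 1 - i)) z (j + 1) *
              Qm (fun i => a (k - i)) (fun i => b (k + 1 - i)) z j from rfl, mul_assoc]
      rw [h1, ih, ← mul_assoc]
      have h2 : Am (fun i => a (k - i)) (fun i => b (k + 1 - i)) z (j + 1) * Dm (a (k - j))
          = Dm (a (k - (j + 1))) * (Am a b z (k - j))ᵀ := by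
        have e1 : k + 1 - (j + 1) = k - j := by omega
        rw [show Am (fun i => a (k - i)) (fun i => b (k + 1 - i)) z (j + 1)
            = !![z - (b (k + 1 - (j + 1)) : ℂ), -1; ((a (k - (j + 1)) : ℂ)) ^ 2, 0] from rfl,
          e1, show Am a b z (k - j) = !![z - (b (k - j) : ℂ), -1; ((a (k - j) : ℂ)) ^ 2, 0] from rfl]
        exact conj_step _ _ _ z
      rw [h2, mul_assoc, ← Matrix.transpose_mul]
      rfl

lemma Rm_eq (a b : ℕ → ℝ) (z : ℂ) (k : ℕ) : ∀ j, j ≤ k →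
    Rm a b z k j * Qm a b z (k - j) = Qm a b z k := by
  intro j
  induction j with
  | zero => intro _; simp [Rm]
  | succ j ih =>
      intro hj
      have h1 : k - j = (k - (j + 1)) + 1 := by omega
      have h2 : Am a b z (k - j) * Qm a b z (k - (j + 1)) = Qm a b z (k - j) := by
        rw [h1]; rfl
      calc Rm a b z k (j + 1) * Qm a b z (k - (j + 1))
          = Rm a b z k j * (Am a b z (k - j) * Qm a b z (k - (j + 1))) := by
            rw [show Rm a b z k (j + 1) = Rm a b z k j * Am a b z (k - j) from rfl, mul_assoc]
        _ = Qm a b z k := by rw [h2]; exact ih (by omega)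

lemma Rm_top (a b : ℕ → ℝ) (z : ℂ) (k : ℕ) : Rm a b z k k = Qm a b z k := by
  have := Rm_eq a b z k k le_rfl
  simpa [Qm] using this

lemma Am_smul (a b : ℕ → ℝ) (z : ℂ) (j : ℕ) (h : a j ≠ 0) :
    Am a b z j = (a j : ℂ) • Tm a b z j := by
  have h' : (a j : ℂ) ≠ 0 := Complex.ofReal_ne_zero.mpr h
  ext i l
  fin_cases i <;> fin_cases l <;>
    simp [Am, Tm, smul_eq_mul, div_eq_iff h', mul_div_cancel₀ _ h', mul_inv_cancel₀ h'] <;> ring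

lemma Qm_smul (a b : ℕ → ℝ) (z : ℂ) : ∀ n : ℕ, (∀ j, 1 ≤ j → j ≤ n → a j ≠ 0) →
    Qm a b z n = (∏ j ∈ Finset.Icc 1 n, (a j : ℂ)) • Pm a b z n := by
  intro n
  induction n with
  | zero => intro _; rw [show Qm a b z 0 = 1 from rfl, show Pm a b z 0 = 1 from rfl, Finset.Icc_eq_empty (by omega)]; simp
  | succ n ih =>
      intro h
      rw [show Qm a b z (n + 1) = Am a b z (n + 1) * Qm a b z n from rfl,
        ih (fun j h1 h2 => h j h1 (by omega)),
        Am_smul a b z (n + 1) (h (n + 1) (by omega) le_rfl),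
        Finset.prod_Icc_succ_top (by omega : 1 ≤ n + 1)]
      rw [Matrix.smul_mul, Matrix.mul_smul, smul_smul]
      rw [show Pm a b z (n + 1) = Tm a b z (n + 1) * Pm a b z n from rfl]
      ring_nf

end RevAux

namespace RevAux

lemma prod_rev (a : ℕ → ℝ) (k : ℕ) (hk : 1 ≤ k) (h0 : a 0 = a k) :
    (∏ j ∈ Finset.Icc 1 k, ((a (k - j) : ℂ))) = ∏ j ∈ Finset.Icc 1 k, (a j : ℂ) := by
  have key : ∀ f : ℕ → ℂ, (∏ j ∈ Finset.Icc 1 k, f j) = ∏ i ∈ Finset.range k, f (1 + i) := by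
    intro f
    rw [← Finset.Ico_add_one_right_eq_Icc, Finset.prod_Ico_eq_prod_range]
    simp
  rw [key, key]
  have h1 : (∏ i ∈ Finset.range k, ((a (k - (1 + i)) : ℂ))) =
      ∏ i ∈ Finset.range k, ((a (k - 1 - i) : ℂ)) := by
    apply Finset.prod_congr rfl
    intro i _
    congr 2
    omega
  rw [h1, Finset.prod_range_reflect (fun i => ((a i : ℂ))) k]
  -- now : ∏ i in range k, a i = ∏ i in range k, a (1 + i)
  obtain ⟨m, rfl⟩ : ∃ m, k = m + 1 := ⟨k - 1, by omega⟩
  rw [Finset.prod_range_succ', Finset.prod_range_succ]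
  rw [h0]
  simp [add_comm]

end RevAux

/-- **Coefficient reversal identities.** For parameters `(α_j, β_j)_{j=1}^k` with
`α₀ := α_k` and reversed parameters `(α'_j, β'_j) = (α_{k-j}, β_{k-j+1})`:
(i) `p_k = p⁻_k`; (ii) `p_{k-1} = α_k q⁻_k`; (iii) `q_k = α_k⁻¹ p⁻_{k-1}`;
(iv) `q_{k-1} = q⁻_{k-1}`. -/
theorem reversal_identities
    (k : ℕ) (hk : 1 ≤ k) (α β : ℕ → ℝ)
    (hpos : ∀ j, 1 ≤ j → j ≤ k → 0 < α j) (hα0 : α 0 = α k) :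
    ∀ z : ℂ,
      firstKind α β k z =
        firstKind (fun j => α (k - j)) (fun j => β (k + 1 - j)) k z ∧
      firstKind α β (k - 1) z =
        (α k : ℂ) * secondKind (fun j => α (k - j)) (fun j => β (k + 1 - j)) k z ∧
      secondKind α β k z =
        (α k : ℂ)⁻¹ * firstKind (fun j => α (k - j)) (fun j => β (k + 1 - j)) (k - 1) z ∧
      secondKind α β (k - 1) z =
        secondKind (fun j => α (k - j)) (fun j => β (k + 1 - j)) (k - 1) z := by
  intro z
  have hne : ∀ j, 1 ≤ j → j ≤ k → α j ≠ 0 := fun j h1 h2 => ne_of_gt (hpos j h1 h2)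
  have hkC : (α k : ℂ) ≠ 0 := Complex.ofReal_ne_zero.mpr (hne k hk le_rfl)
  have hne' : ∀ j, 1 ≤ j → j ≤ k → (fun j => α (k - j)) j ≠ 0 := by
    intro j h1 h2
    rcases Nat.lt_or_ge j k with h | h
    · exact hne (k - j) (by omega) (by omega)
    · show α (k - j) ≠ 0
      rw [show k - j = 0 by omega, hα0]; exact hne k hk le_rfl
  have hQ := RevAux.Qm_smul α β z k hne
  have hQ' := RevAux.Qm_smul (fun j => α (k - j)) (fun j => β (k + 1 - j)) z k hne'
  rw [RevAux.prod_rev α k hk hα0] at hQ'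
  have hconj := RevAux.conj α β k z k
  rw [Nat.sub_self, hα0, RevAux.Rm_top] at hconj
  rw [hQ, hQ'] at hconj
  rw [Matrix.smul_mul, Matrix.transpose_smul, Matrix.mul_smul] at hconj
  have hc : (∏ j ∈ Finset.Icc 1 k, ((α j : ℂ))) ≠ 0 := by
    rw [Finset.prod_ne_zero_iff]
    intro j hj
    rw [Finset.mem_Icc] at hj
    exact Complex.ofReal_ne_zero.mpr (hne j hj.1 hj.2)
  have key := smul_right_injective (Matrix (Fin 2) (Fin 2) ℂ) hc hconj
  obtain ⟨m, rfl⟩ : ∃ m, k = m + 1 := ⟨k - 1, by omega⟩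
  rw [RevAux.Pm_entries α β z m,
    RevAux.Pm_entries (fun j => α (m + 1 - j)) (fun j => β (m + 1 + 1 - j)) z m] at key
  have E := Matrix.ext_iff.mpr key
  have e00 := E 0 0
  have e01 := E 0 1
  have e10 := E 1 0
  have e11 := E 1 1
  clear E key hconj hQ hQ'
  simp only [RevAux.Dm, Matrix.mul_apply, Fin.sum_univ_two, Matrix.transpose_apply,
    Matrix.of_apply, Matrix.cons_val', Matrix.cons_val_zero, Matrix.cons_val_one,
    Matrix.head_cons, Matrix.head_fin_const, Matrix.empty_val', Matrix.cons_val_fin_one,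
    Nat.sub_self] at e00 e01 e10 e11
  rw [hα0] at e10 e11
  refine ⟨?_, ?_, ?_, ?_⟩
  · show pShift α β (m + 2) z = pShift (fun j => α (m + 1 - j)) (fun j => β (m + 1 + 1 - j)) (m + 2) z
    linear_combination -e00
  · show pShift α β (m + 1 - 1 + 1) z = (α (m + 1) : ℂ) *
      ((((fun j => α (m + 1 - j)) 1 : ℝ) : ℂ)⁻¹ *
        pShift (fun j => α (m + 1 - (j + 1))) (fun j => β (m + 1 + 1 - (j + 1))) (m + 1) z)
    have hgoal : (α (m + 1) : ℂ) * pShift α β (m + 1 - 1 + 1) z =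
        (α (m + 1) : ℂ) * ((α (m + 1) : ℂ) *
          ((((α (m + 1 - 1) : ℝ)) : ℂ)⁻¹ *
            pShift (fun j => α (m + 1 - (j + 1))) (fun j => β (m + 1 + 1 - (j + 1))) (m + 1) z)) := by
      rw [show m + 1 - 1 + 1 = m + 1 by omega]
      linear_combination -e01
    exact mul_left_cancel₀ hkC hgoal
  · show ((α 1 : ℂ))⁻¹ * pShift (fun j => α (j + 1)) (fun j => β (j + 1)) (m + 1) z =
      (α (m + 1) : ℂ)⁻¹ * pShift (fun j => α (m + 1 - j)) (fun j => β (m + 1 + 1 - j)) (m + 1 - 1 + 1) z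
    rw [show m + 1 - 1 + 1 = m + 1 by omega]
    have hgoal : (α (m + 1) : ℂ) * ((α (m + 1) : ℂ) * (((α 1 : ℂ))⁻¹ *
          pShift (fun j => α (j + 1)) (fun j => β (j + 1)) (m + 1) z)) =
        (α (m + 1) : ℂ) * ((α (m + 1) : ℂ) * ((α (m + 1) : ℂ)⁻¹ *
          pShift (fun j => α (m + 1 - j)) (fun j => β (m + 1 + 1 - j)) (m + 1) z)) := by
      rw [mul_inv_cancel_left₀ hkC]
      linear_combination -e10
    exact mul_left_cancel₀ hkC (mul_left_cancel₀ hkC hgoal)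
  · show ((α 1 : ℂ))⁻¹ * pShift (fun j => α (j + 1)) (fun j => β (j + 1)) (m + 1 - 1) z =
      (((α (m + 1 - 1) : ℝ)) : ℂ)⁻¹ *
        pShift (fun j => α (m + 1 - (j + 1))) (fun j => β (m + 1 + 1 - (j + 1))) (m + 1 - 1) z
    rw [show m + 1 - 1 = m by omega]
    have hgoal : (α (m + 1) : ℂ) ^ 3 * (((α 1 : ℂ))⁻¹ *
          pShift (fun j => α (j + 1)) (fun j => β (j + 1)) m z) =
        (α (m + 1) : ℂ) ^ 3 * ((((α (m + 1 - 1) : ℝ)) : ℂ)⁻¹ *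
          pShift (fun j => α (m + 1 - (j + 1))) (fun j => β (m + 1 + 1 - (j + 1))) m z) := by
      linear_combination -e11
    exact mul_left_cancel₀ (pow_ne_zero 3 hkC) hgoal
end
end

section
/- Let n be a discrete m-function, let α, a > 0 and β ∈ ℝ, and suppose g is a discrete m-function such that a² · n(z) · (β − z − α² g(z)) = α² for all z ∈ ℂ₊ (equivalently, g = 1/(α² M̃) on ℂ₊ where M̃(z) = (β − z − α²/(a² n(z)))⁻¹). Then α = a. -/
open MeasureTheory Polynomial Filter

noncomputable section

/-! By dominated convergence, `iy · m(iy) → -1` as `y → ∞` for every discrete m-function `m`,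
hence also `m(iy) → 0`. Along `z = iy` the left side
`a² (β n(z) - z n(z) - α² n(z) g(z))` of the identity therefore tends to `a²`, so `α² = a²`. -/

open Complex Topology

lemma tendsto_inv_ofReal_mul_I_atTop : Tendsto (fun y : ℝ => ((y : ℂ) * I)⁻¹) atTop (𝓝 0) := by
  refine tendsto_inv₀_cobounded.comp ?_
  rw [← tendsto_norm_atTop_iff_cobounded]
  exact tendsto_abs_atTop_atTop.congr fun y => by simp

lemma abs_le_norm_ofReal_sub_ofReal_mul_I (x y : ℝ) : |y| ≤ ‖(x : ℂ) - y * I‖ := by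
  simpa using abs_im_le_norm ((x : ℂ) - y * I)

lemma norm_ofReal_mul_I_mul_inv_sub_le_one (x y : ℝ) :
    ‖(y : ℂ) * I * ((x : ℂ) - y * I)⁻¹‖ ≤ 1 := by
  rw [norm_mul, norm_inv, norm_mul, norm_I, mul_one, norm_real, Real.norm_eq_abs]
  exact mul_inv_le_one_of_le₀ (abs_le_norm_ofReal_sub_ofReal_mul_I x y) (norm_nonneg _)

lemma tendsto_ofReal_mul_I_mul_inv_sub_atTop (x : ℝ) :
    Tendsto (fun y : ℝ => (y : ℂ) * I * ((x : ℂ) - y * I)⁻¹) atTop (𝓝 (-1)) := by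
  have hlim : Tendsto (fun y : ℝ => ((x : ℂ) * ((y : ℂ) * I)⁻¹ - 1)⁻¹) atTop (𝓝 (-1)) := by
    simpa using ((tendsto_inv_ofReal_mul_I_atTop.const_mul (x : ℂ)).sub_const 1).inv₀
      (by norm_num)
  refine hlim.congr' ?_
  filter_upwards [eventually_ne_atTop 0] with y hy
  have hyI : (y : ℂ) * I ≠ 0 := by simpa using hy
  rw [← div_eq_mul_inv, div_sub_one hyI, inv_div, div_eq_mul_inv]

theorem tendsto_ofReal_mul_I_mul_integral_inv_sub_atTop (ρ : Measure ℝ) [IsFiniteMeasure ρ] :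
    Tendsto (fun y : ℝ => (y : ℂ) * I * ∫ x, ((x : ℂ) - y * I)⁻¹ ∂ρ) atTop
      (𝓝 (-(ρ.real Set.univ : ℂ))) := by
  simp_rw [← integral_const_mul]
  rw [show -(ρ.real Set.univ : ℂ) = ∫ _, (-1 : ℂ) ∂ρ by simp]
  exact tendsto_integral_filter_of_dominated_convergence (fun _ => 1)
    (Eventually.of_forall fun y => by fun_prop)
    (Eventually.of_forall fun y => Eventually.of_forall fun x =>
      norm_ofReal_mul_I_mul_inv_sub_le_one x y)
    (integrable_const 1) (Eventually.of_forall tendsto_ofReal_mul_I_mul_inv_sub_atTop)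

namespace IsDiscreteMFunction

variable {m : ℂ → ℂ}

theorem tendsto_ofReal_mul_I_mul_apply_atTop (hm : IsDiscreteMFunction m) :
    Tendsto (fun y : ℝ => (y : ℂ) * I * m (y * I)) atTop (𝓝 (-1)) := by
  obtain ⟨ρ, hρ, -, hm⟩ := hm
  have hlim := tendsto_ofReal_mul_I_mul_integral_inv_sub_atTop ρ
  rw [probReal_univ, ofReal_one] at hlim
  refine hlim.congr' ?_
  filter_upwards [eventually_gt_atTop 0] with y hy
  rw [hm _ (by simpa using hy)]

theorem tendsto_apply_ofReal_mul_I_atTop (hm : IsDiscreteMFunction m) :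
    Tendsto (fun y : ℝ => m (y * I)) atTop (𝓝 0) := by
  have hlim := tendsto_inv_ofReal_mul_I_atTop.mul hm.tendsto_ofReal_mul_I_mul_apply_atTop
  rw [zero_mul] at hlim
  refine hlim.congr' ?_
  filter_upwards [eventually_ne_atTop 0] with y hy
  rw [inv_mul_cancel_left₀ (by simpa using hy)]

end IsDiscreteMFunction

/-- If `n` and `g` are discrete m-functions and `a² n(z) (β - z - α² g(z)) = α²` on `ℂ₊`
(i.e. `g = 1/(α² M̃)` where `M̃(z) = (β - z - α²/(a² n(z)))⁻¹`), then `α = a`. -/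
theorem alpha_eq_a
    (n g : ℂ → ℂ) (α a β : ℝ) (hα : 0 < α) (ha : 0 < a)
    (hn : IsDiscreteMFunction n) (hg : IsDiscreteMFunction g)
    (heq : ∀ z : ℂ, 0 < z.im →
      (a : ℂ) ^ 2 * n z * ((β : ℂ) - z - (α : ℂ) ^ 2 * g z) = (α : ℂ) ^ 2) :
    α = a := by
  have hlim : Tendsto (fun y : ℝ => (a : ℂ) ^ 2 *
      (β * n (y * I) - y * I * n (y * I) - α ^ 2 * (n (y * I) * g (y * I)))) atTop
      (𝓝 ((a : ℂ) ^ 2 * (β * 0 - (-1) - α ^ 2 * (0 * 0)))) :=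
    ((((hn.tendsto_apply_ofReal_mul_I_atTop.const_mul _).sub
      hn.tendsto_ofReal_mul_I_mul_apply_atTop).sub
      ((hn.tendsto_apply_ofReal_mul_I_atTop.mul hg.tendsto_apply_ofReal_mul_I_atTop).const_mul
        _)).const_mul _)
  have hconst : ∀ᶠ y : ℝ in atTop, (a : ℂ) ^ 2 *
      (β * n (y * I) - y * I * n (y * I) - α ^ 2 * (n (y * I) * g (y * I))) = α ^ 2 := by
    filter_upwards [eventually_gt_atTop 0] with y hy
    linear_combination heq (y * I) (by simpa using hy)
  have hsq : (α : ℂ) ^ 2 = a ^ 2 := by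
    simpa using tendsto_nhds_unique (tendsto_const_nhds.congr' (hconst.mono fun _ => Eq.symm)) hlim
  exact (pow_left_inj₀ hα.le ha.le two_ne_zero).mp (by exact_mod_cast hsq)
end
end
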